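/- Let p ∈ ℂ[X] be a Shabat polynomial of degree n ≥ 2 whose coefficient of Xⁿ⁻¹ is zero, and suppose the sum of the distinct complex roots of p − 1 equals 0. Then there exist no α, β ∈ ℂ with α ≠ 0 such that the polynomial q(z) = p(αz + β) is in Zapponi form; i.e., no affine change of variable brings p to Zapponi form. -/

import Mathlib

/-!
The polynomials `p - 1`, `p + 1` and `p'` all have vanishing subleading coefficient, so the sum
of their roots counted with multiplicity is zero. Since every critical point of a Shabat
polynomial is a root of `p ∓ 1` whose multiplicity drops by one in `p'`, the roots of `p'` are
those of `p - 1` and `p + 1` with each distinct root removed once; hence the distinct roots of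
`p + 1` also sum to zero. The substitution `z ↦ αz + β` moves the `k` distinct roots of `p - 1`
and the `l` distinct roots of `p + 1` by `r ↦ (r - β) / α`, so the Zapponi conditions become
`-kβ = α` and `-lβ = -α`. Adding them gives `(k + l) β = 0`, which forces `α = 0`.
-/

open Polynomial

namespace Multiset

variable {α : Type*} [DecidableEq α]

theorem count_sub_dedup (s : Multiset α) (a : α) : count a (s - s.dedup) = count a s - 1 := by
  rw [count_sub, count_dedup]
  split_ifs with h
  · rfl
  · rw [count_eq_zero_of_notMem h]

theorem sum_sub_dedup {M : Type*} [AddCommGroup M] [DecidableEq M] (s : Multiset M) :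
    (s - s.dedup).sum = s.sum - s.dedup.sum := by
  rw [eq_sub_iff_add_eq, ← sum_add, tsub_add_cancel_of_le (dedup_le s)]

theorem sum_toFinset_id {M : Type*} [AddCommMonoid M] [DecidableEq M] (s : Multiset M) :
    s.toFinset.sum id = s.dedup.sum := by
  simp [Finset.sum, toFinset_val]

end Multiset

namespace Polynomial

theorem nextCoeff_sub_C {R : Type*} [Ring R] {p : R[X]} (hp : p.natDegree ≠ 1) (a : R) :
    (p - C a).nextCoeff = p.nextCoeff := by
  unfold nextCoeff
  rw [natDegree_sub_C]
  split_ifs with h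
  · rfl
  · rw [coeff_sub, coeff_C, if_neg (by omega), sub_zero]

theorem nextCoeff_derivative {R : Type*} [Semiring R] [IsAddTorsionFree R] (p : R[X]) :
    (derivative p).nextCoeff = p.nextCoeff * (p.natDegree - 1 : ℕ) := by
  unfold nextCoeff
  rw [natDegree_derivative]
  split_ifs with h₁ h₂ h₂
  · simp
  · rw [show p.natDegree = 1 by omega]; simp
  · omega
  · rw [coeff_derivative, show p.natDegree - 1 - 1 + 1 = p.natDegree - 1 by omega]
    congr
    rw [← Nat.cast_succ]
    congr 1
    omega

variable {K : Type*} [Field K]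

theorem Splits.sum_roots_eq_zero {f : K[X]} (hf : f.Splits) (h : f.nextCoeff = 0) :
    f.roots.sum = 0 := by
  rcases eq_or_ne f 0 with rfl | hf0
  · simp
  have := hf.nextCoeff_eq_neg_sum_roots_mul_leadingCoeff
  rw [h, eq_comm, mul_eq_zero] at this
  exact this.resolve_left (neg_ne_zero.2 (leadingCoeff_ne_zero.2 hf0))

section CriticalValues

variable [CharZero K] [DecidableEq K] {p : K[X]} {a b : K}

theorem roots_derivative_eq_of_critical_values (hab : a ≠ b)
    (hcrit : ∀ z, (derivative p).eval z = 0 → p.eval z = a ∨ p.eval z = b) :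
    (derivative p).roots =
      ((p - C a).roots - (p - C a).roots.dedup) + ((p - C b).roots - (p - C b).roots.dedup) := by
  ext z
  simp only [Multiset.count_add, Multiset.count_sub_dedup, count_roots]
  have derivative_sub_C (c : K) : derivative (p - C c) = derivative p := by simp
  have not_root_of_ne {c : K} (hc : p.eval z ≠ c) : rootMultiplicity z (p - C c) = 0 :=
    rootMultiplicity_eq_zero (by simpa [sub_eq_zero] using hc)
  by_cases ha : p.eval z = a
  · have hroot : (p - C a).IsRoot z := by simp [ha]
    rw [← derivative_sub_C a, derivative_rootMultiplicity_of_root hroot,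
      not_root_of_ne (ha ▸ hab : p.eval z ≠ b)]
    omega
  by_cases hb : p.eval z = b
  · have hroot : (p - C b).IsRoot z := by simp [hb]
    rw [← derivative_sub_C b, derivative_rootMultiplicity_of_root hroot, not_root_of_ne ha]
    omega
  rw [not_root_of_ne ha, not_root_of_ne hb,
    rootMultiplicity_eq_zero fun h => (hcrit z h).elim ha hb]

theorem sum_dedup_roots_add_sum_dedup_roots_eq (hab : a ≠ b)
    (hcrit : ∀ z, (derivative p).eval z = 0 → p.eval z = a ∨ p.eval z = b) :
    (p - C a).roots.dedup.sum + (p - C b).roots.dedup.sum =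
      (p - C a).roots.sum + (p - C b).roots.sum - (derivative p).roots.sum := by
  rw [roots_derivative_eq_of_critical_values hab hcrit, Multiset.sum_add,
    Multiset.sum_sub_dedup, Multiset.sum_sub_dedup]
  abel

theorem sum_toFinset_roots_sub_C_add_sum_toFinset_roots_sub_C_eq_zero [IsAlgClosed K]
    (hp : p.natDegree ≠ 1) (hnext : p.nextCoeff = 0) (hab : a ≠ b)
    (hcrit : ∀ z, (derivative p).eval z = 0 → p.eval z = a ∨ p.eval z = b) :
    (p - C a).roots.toFinset.sum id + (p - C b).roots.toFinset.sum id = 0 := by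
  have hsum_sub_C (c : K) : (p - C c).roots.sum = 0 :=
    (IsAlgClosed.splits _).sum_roots_eq_zero (by rw [nextCoeff_sub_C hp, hnext])
  have hsum_derivative : (derivative p).roots.sum = 0 :=
    (IsAlgClosed.splits _).sum_roots_eq_zero (by rw [nextCoeff_derivative, hnext, zero_mul])
  rw [Multiset.sum_toFinset_id, Multiset.sum_toFinset_id,
    sum_dedup_roots_add_sum_dedup_roots_eq hab hcrit, hsum_sub_C, hsum_sub_C, hsum_derivative,
    add_zero, sub_zero]

end CriticalValues

theorem sum_toFinset_roots_comp_C_mul_X_add_C [DecidableEq K] (f : K[X]) {a : K} (ha : a ≠ 0)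
    (b : K) :
    (f.comp (C a * X + C b)).roots.toFinset.sum id =
      a⁻¹ * (f.roots.toFinset.sum id - f.roots.toFinset.card • b) := by
  have hinj : Function.Injective fun x : K => a⁻¹ * (x - b) := fun x y h => by
    simpa [ha] using h
  rw [roots_comp_C_mul_X_add_C f a b ha.isUnit, Ring.inverse_eq_inv', Multiset.toFinset_map,
    Finset.sum_image fun x _ y _ h => hinj h]
  simp only [id, Finset.mul_sum, Finset.sum_sub_distrib, mul_sub, Finset.sum_const,
    mul_smul_comm]

end Polynomial

/-- If `p` is a Shabat polynomial of degree `n ≥ 2` with vanishing coefficient of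
`X^(n-1)` and the sum of the distinct roots of `p - 1` is zero, then no affine
change of variable `z ↦ αz + β` (with `α ≠ 0`) brings `p` to Zapponi form. -/
theorem shabat_no_zapponi_form_of_sum_eq_zero
    (p : Polynomial ℂ) (n : ℕ) (hn : 2 ≤ n) (hdeg : p.natDegree = n)
    (hShabat : ∀ z : ℂ, (Polynomial.derivative p).eval z = 0 →
      p.eval z = 1 ∨ p.eval z = -1)
    (hcoeff : p.coeff (n - 1) = 0)
    (hsum : ((p - 1).roots.toFinset.sum id) = 0) :
    ¬ ∃ (α β : ℂ) (q : Polynomial ℂ), α ≠ 0 ∧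
      (∀ z : ℂ, q.eval z = p.eval (α * z + β)) ∧
      ((q - 1).roots.toFinset.sum id) = 1 ∧
      ((q + 1).roots.toFinset.sum id) = -1 := by
  rintro ⟨α, β, q, hα, hq, hq1, hq2⟩
  have hnext : p.nextCoeff = 0 := by rw [nextCoeff_of_natDegree_pos (by omega), hdeg, hcoeff]
  have hsum_plus : (p + 1).roots.toFinset.sum id = 0 := by
    have key := sum_toFinset_roots_sub_C_add_sum_toFinset_roots_sub_C_eq_zero (by omega) hnext
      (by norm_num : (1 : ℂ) ≠ -1) hShabat
    rwa [C_1, hsum, zero_add, map_neg, C_1, sub_neg_eq_add] at key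
  have hqp : q = p.comp (C α * X + C β) := Polynomial.funext fun z => by simp [hq]
  have hq_sub_C (c : ℂ) : q - C c = (p - C c).comp (C α * X + C β) := by
    rw [sub_comp, C_comp, hqp]
  rw [← C_1, hq_sub_C, sum_toFinset_roots_comp_C_mul_X_add_C _ hα, C_1, hsum] at hq1
  rw [← sub_neg_eq_add, ← C_1, ← map_neg, hq_sub_C, sum_toFinset_roots_comp_C_mul_X_add_C _ hα,
    map_neg, C_1, sub_neg_eq_add, hsum_plus] at hq2
  field_simp at hq1 hq2
  have hβ : ((p - 1).roots.toFinset.card + (p + 1).roots.toFinset.card) • β = 0 := by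
    rw [add_smul]; linear_combination -(hq1 + hq2)
  apply hα
  rw [← hq1]
  rcases smul_eq_zero.1 hβ with hcard | rfl
  · simp [(Nat.add_eq_zero_iff.1 hcard).1]
  · simp
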